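/- Let γ : ℝ → ℝ³ be of class C³, parametrized by arc length, with curvature κ(s) = ‖γ''(s)‖ > 0 for all s, torsion τ, and tube map p(ρ, s, θ) = γ(s) + ρ cos θ n(s) + ρ sin θ b(s). Fix r > 0, s and θ. Then as (η₁, η₂) → (0, 0), ‖p(r, s + η₁, θ + η₂) − p(r, s, θ)‖² = η₁² (1 − r κ(s) cos θ)² + r² (η₂ + η₁ τ(s))² + o(η₁² + η₂²). -/

import Mathlib

open Real Asymptotics

/-- Cross product of two vectors of Euclidean 3-space. -/
noncomputable def cross3 (x y : EuclideanSpace ℝ (Fin 3)) : EuclideanSpace ℝ (Fin 3) :=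
  (WithLp.equiv 2 (Fin 3 → ℝ)).symm
    ![x 1 * y 2 - x 2 * y 1, x 2 * y 0 - x 0 * y 2, x 0 * y 1 - x 1 * y 0]

/-- Curvature of an arc-length parametrized curve. -/
noncomputable def curv (γ : ℝ → EuclideanSpace ℝ (Fin 3)) (s : ℝ) : ℝ :=
  ‖deriv (deriv γ) s‖

/-- Unit tangent. -/
noncomputable def tang (γ : ℝ → EuclideanSpace ℝ (Fin 3)) (s : ℝ) : EuclideanSpace ℝ (Fin 3) :=
  deriv γ s

/-- Principal normal. -/
noncomputable def nrml (γ : ℝ → EuclideanSpace ℝ (Fin 3)) (s : ℝ) : EuclideanSpace ℝ (Fin 3) :=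
  (curv γ s)⁻¹ • deriv (deriv γ) s

/-- Binormal. -/
noncomputable def binrml (γ : ℝ → EuclideanSpace ℝ (Fin 3)) (s : ℝ) : EuclideanSpace ℝ (Fin 3) :=
  cross3 (tang γ s) (nrml γ s)

/-- Torsion of an arc-length parametrized curve. -/
noncomputable def tors (γ : ℝ → EuclideanSpace ℝ (Fin 3)) (s : ℝ) : ℝ :=
  (inner ℝ (cross3 (deriv γ s) (deriv (deriv γ) s)) (deriv (deriv (deriv γ)) s) : ℝ) /
    (curv γ s) ^ 2

/-- The tube map `p(ρ, s, θ) = γ(s) + ρ cos θ n(s) + ρ sin θ b(s)`. -/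
noncomputable def tubeMap (γ : ℝ → EuclideanSpace ℝ (Fin 3)) (ρ s θ : ℝ) :
    EuclideanSpace ℝ (Fin 3) :=
  γ s + (ρ * Real.cos θ) • nrml γ s + (ρ * Real.sin θ) • binrml γ s

/-!
The tube map is differentiable in `(s, θ)`, so the squared distance `‖p(s + η₁, θ + η₂) - p(s, θ)‖²`
agrees with `‖Dp(η)‖²` up to `o(‖η‖²)`. The Frenet–Serret formulas `n' = -κ t + τ b`, `b' = -τ n`,
obtained by differentiating the orthonormality relations of the frame `(t, n, t × n)`, give
`Dp(η) = η₁ (1 - r κ cos θ) t + r (η₂ + η₁ τ) (cos θ b - sin θ n)`, whose squared norm is the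
stated quadratic form.
-/

open scoped RealInnerProductSpace
open Filter Topology

section InnerProductSpace

variable {E : Type*} [NormedAddCommGroup E] [InnerProductSpace ℝ E]

theorem Orthonormal.eq_smul_add_smul_add_smul [FiniteDimensional ℝ E]
    (hE : Module.finrank ℝ E = 3) {t n b : E} (h : Orthonormal ℝ ![t, n, b]) {v : E} {a c d : ℝ}
    (ha : ⟪t, v⟫ = a) (hc : ⟪n, v⟫ = c) (hd : ⟪b, v⟫ = d) : v = a • t + c • n + d • b := by
  have hspan := h.linearIndependent.span_eq_top_of_card_eq_finrank' (by simp [hE])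
  rw [← (OrthonormalBasis.mk h hspan.ge).sum_repr' v]
  simp [Fin.sum_univ_three, ha, hc, hd]

theorem Orthonormal.norm_sq_smul_add_smul_add_smul {t n b : E} (h : Orthonormal ℝ ![t, n, b])
    (a c d : ℝ) : ‖a • t + c • n + d • b‖ ^ 2 = a ^ 2 + c ^ 2 + d ^ 2 := by
  have := h.inner_sum ![a, c, d] ![a, c, d] Finset.univ
  simp only [Fin.sum_univ_three] at this
  simpa [← real_inner_self_eq_norm_sq, sq] using this

theorem HasDerivAt.inner_add_inner_eq_zero {u v : ℝ → E} {u' v' : E} {s c : ℝ}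
    (hu : HasDerivAt u u' s) (hv : HasDerivAt v v' s) (huv : ∀ x, ⟪u x, v x⟫ = c) :
    ⟪u', v s⟫ + ⟪u s, v'⟫ = 0 := by
  have h := hu.inner ℝ hv
  simp only [huv] at h
  rw [add_comm]
  exact h.unique (hasDerivAt_const s c)

end InnerProductSpace

theorem HasFDerivAt.norm_sub_sq_sub_norm_sq_isLittleO {E F : Type*} [NormedAddCommGroup E]
    [NormedSpace ℝ E] [NormedAddCommGroup F] [NormedSpace ℝ F] {f : E → F} {L : E →L[ℝ] F}
    {x : E} (hf : HasFDerivAt f L x) :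
    (fun h => ‖f (x + h) - f x‖ ^ 2 - ‖L h‖ ^ 2) =o[𝓝 0] fun h => ‖h‖ ^ 2 := by
  set ρ := fun h => f (x + h) - f x - L h
  have hρ : ρ =o[𝓝 0] fun h => h := hasFDerivAt_iff_isLittleO_nhds_zero.mp hf
  have hbound (h : E) :
      |‖f (x + h) - f x‖ ^ 2 - ‖L h‖ ^ 2| ≤ ‖ρ h‖ * (‖ρ h‖ + 2 * (‖L‖ * ‖h‖)) := by
    have hdiff : |‖f (x + h) - f x‖ - ‖L h‖| ≤ ‖ρ h‖ := abs_norm_sub_norm_le _ _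
    have hsum : ‖f (x + h) - f x‖ ≤ ‖ρ h‖ + ‖L h‖ :=
      (congrArg norm (sub_add_cancel _ (L h))).symm.trans_le (norm_add_le _ _)
    have hL : ‖L h‖ ≤ ‖L‖ * ‖h‖ := L.le_opNorm h
    rw [sq_sub_sq, abs_mul, abs_of_nonneg (by positivity), mul_comm (‖ρ h‖)]
    exact mul_le_mul (by linarith) hdiff (abs_nonneg _) (by positivity)
  have hO : (fun h => ‖ρ h‖ + 2 * (‖L‖ * ‖h‖)) =O[𝓝 0] fun h => ‖h‖ :=
    hρ.isBigO.norm_norm.add (((isBigO_refl _ _).const_mul_left ‖L‖).const_mul_left 2)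
  refine (IsBigO.of_bound 1 (Eventually.of_forall fun h => ?_)).trans_isLittleO
    ((hρ.norm_norm.mul_isBigO hO).congr_right fun h => (sq ‖h‖).symm)
  rw [one_mul, Real.norm_eq_abs, Real.norm_of_nonneg (by positivity)]
  exact hbound h

theorem isBigO_norm_sq_fst_sq_add_snd_sq (l : Filter (ℝ × ℝ)) :
    (fun η : ℝ × ℝ => ‖η‖ ^ 2) =O[l] fun η => η.1 ^ 2 + η.2 ^ 2 := by
  refine IsBigO.of_bound 1 (Eventually.of_forall fun η => ?_)
  rw [one_mul, Real.norm_of_nonneg (by positivity), Real.norm_of_nonneg (by positivity),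
    Prod.norm_def, Real.norm_eq_abs, Real.norm_eq_abs]
  rcases le_total |η.1| |η.2| with h | h
  · rw [max_eq_right h, sq_abs]; nlinarith
  · rw [max_eq_left h, sq_abs]; nlinarith

theorem hasFDerivAt_tube {F : Type*} [NormedAddCommGroup F] [NormedSpace ℝ F] {c n b : ℝ → F}
    {c' n' b' : F} {s : ℝ} (hc : HasDerivAt c c' s) (hn : HasDerivAt n n' s)
    (hb : HasDerivAt b b' s) (r θ : ℝ) :
    HasFDerivAt (fun q : ℝ × ℝ => c q.1 + (r * cos q.2) • n q.1 + (r * sin q.2) • b q.1)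
      ((ContinuousLinearMap.fst ℝ ℝ ℝ).smulRight (c' + (r * cos θ) • n' + (r * sin θ) • b') +
        (ContinuousLinearMap.snd ℝ ℝ ℝ).smulRight (r • (cos θ • b s - sin θ • n s))) (s, θ) := by
  have h1 := hc.hasFDerivAt.comp (s, θ) (hasFDerivAt_fst (𝕜 := ℝ) (p := (s, θ)))
  have h2 := hn.hasFDerivAt.comp (s, θ) (hasFDerivAt_fst (𝕜 := ℝ) (p := (s, θ)))
  have h3 := hb.hasFDerivAt.comp (s, θ) (hasFDerivAt_fst (𝕜 := ℝ) (p := (s, θ)))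
  have hcos := ((Real.hasDerivAt_cos θ).hasFDerivAt.comp (s, θ)
    (hasFDerivAt_snd (𝕜 := ℝ) (p := (s, θ)))).const_mul r
  have hsin := ((Real.hasDerivAt_sin θ).hasFDerivAt.comp (s, θ)
    (hasFDerivAt_snd (𝕜 := ℝ) (p := (s, θ)))).const_mul r
  refine ((h1.add (hcos.smul h2)).add (hsin.smul h3)).congr_fderiv ?_
  ext
  · simp
  · simp
    module

section CrossProduct

open Matrix WithLp

theorem cross3_eq_toLp_crossProduct (x y : EuclideanSpace ℝ (Fin 3)) :
    cross3 x y = toLp 2 (ofLp x ⨯₃ ofLp y) := by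
  ext i; fin_cases i <;> simp [cross3, cross_apply]

theorem cross3_smul_right (c : ℝ) (x y : EuclideanSpace ℝ (Fin 3)) :
    cross3 x (c • y) = c • cross3 x y := by
  simp [cross3_eq_toLp_crossProduct]

theorem inner_cross3_left (x y : EuclideanSpace ℝ (Fin 3)) : ⟪x, cross3 x y⟫ = 0 := by
  simp [cross3_eq_toLp_crossProduct, EuclideanSpace.inner_eq_star_dotProduct, dotProduct_comm,
    dot_self_cross]

theorem inner_cross3_right (x y : EuclideanSpace ℝ (Fin 3)) : ⟪y, cross3 x y⟫ = 0 := by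
  simp [cross3_eq_toLp_crossProduct, EuclideanSpace.inner_eq_star_dotProduct, dotProduct_comm,
    dot_cross_self]

theorem norm_cross3 {x y : EuclideanSpace ℝ (Fin 3)} (hx : ‖x‖ = 1) (hy : ‖y‖ = 1)
    (hxy : ⟪x, y⟫ = 0) : ‖cross3 x y‖ = 1 := by
  rw [cross3_eq_toLp_crossProduct, InnerProductGeometry.norm_ofLp_crossProduct, hx, hy,
    (InnerProductGeometry.inner_eq_zero_iff_angle_eq_pi_div_two x y).mp hxy, Real.sin_pi_div_two]
  ring

theorem orthonormal_cross3 {x y : EuclideanSpace ℝ (Fin 3)} (hx : ‖x‖ = 1) (hy : ‖y‖ = 1)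
    (hxy : ⟪x, y⟫ = 0) : Orthonormal ℝ ![x, y, cross3 x y] := by
  rw [orthonormal_iff_ite]
  intro i j
  fin_cases i <;> fin_cases j <;>
    simp [hx, hy, hxy, real_inner_comm x y, inner_cross3_left,
      inner_cross3_right, real_inner_comm _ (cross3 x y), norm_cross3 hx hy hxy]

theorem DifferentiableAt.cross3 {f g : ℝ → EuclideanSpace ℝ (Fin 3)} {s : ℝ}
    (hf : DifferentiableAt ℝ f s) (hg : DifferentiableAt ℝ g s) :
    DifferentiableAt ℝ (fun u => _root_.cross3 (f u) (g u)) s := by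
  rw [differentiableAt_piLp] at hf hg ⊢
  intro i
  fin_cases i <;> simp [_root_.cross3] <;> fun_prop

end CrossProduct

section Frenet

variable {γ : ℝ → EuclideanSpace ℝ (Fin 3)}

-- Also where `curv γ s = 0`: then `deriv (deriv γ) s = 0`, and `nrml γ s = 0⁻¹ • 0`.
theorem curv_smul_nrml (γ : ℝ → EuclideanSpace ℝ (Fin 3)) (s : ℝ) :
    curv γ s • nrml γ s = deriv (deriv γ) s := by
  rcases eq_or_ne (curv γ s) 0 with h | h
  · rw [h, zero_smul]
    exact (norm_eq_zero.mp h).symm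
  · exact smul_inv_smul₀ h _

theorem tors_eq_inner_binrml (γ : ℝ → EuclideanSpace ℝ (Fin 3)) (s : ℝ) :
    tors γ s = (curv γ s)⁻¹ * ⟪binrml γ s, deriv (deriv (deriv γ)) s⟫ := by
  rw [tors, ← curv_smul_nrml, cross3_smul_right, real_inner_smul_left]
  field_simp
  rfl

theorem hasDerivAt_tang {s : ℝ} (hγ : DifferentiableAt ℝ (deriv γ) s) :
    HasDerivAt (tang γ) (curv γ s • nrml γ s) s := by
  rw [curv_smul_nrml]
  exact hγ.hasDerivAt

theorem orthonormal_frenetFrame (hγ : Differentiable ℝ (deriv γ)) (harc : ∀ s, ‖deriv γ s‖ = 1)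
    {s : ℝ} (hκ : curv γ s ≠ 0) : Orthonormal ℝ ![tang γ s, nrml γ s, binrml γ s] := by
  have htt : ∀ u, ⟪tang γ u, tang γ u⟫ = 1 := fun u => by
    rw [real_inner_self_eq_norm_sq, tang, harc, one_pow]
  have htn : ⟪tang γ s, curv γ s • nrml γ s⟫ = 0 := by
    have := (hasDerivAt_tang (hγ s)).inner_add_inner_eq_zero (hasDerivAt_tang (hγ s)) htt
    rw [real_inner_comm] at this
    linarith
  rw [real_inner_smul_right, mul_eq_zero] at htn
  refine orthonormal_cross3 (harc s) ?_ (htn.resolve_left hκ)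
  rw [nrml, norm_smul, norm_inv, curv, norm_norm]
  exact inv_mul_cancel₀ hκ

theorem hasDerivAt_nrml (hγ2 : Differentiable ℝ (deriv γ))
    (hγ3 : Differentiable ℝ (deriv (deriv γ))) (harc : ∀ s, ‖deriv γ s‖ = 1)
    (hκ : ∀ s, curv γ s ≠ 0) (s : ℝ) :
    HasDerivAt (nrml γ) (-curv γ s • tang γ s + tors γ s • binrml γ s) s := by
  have frame := fun u => orthonormal_iff_ite.mp (orthonormal_frenetFrame hγ2 harc (hκ u))
  have hinv : DifferentiableAt ℝ (fun u => (curv γ u)⁻¹) s :=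
    ((hγ3 s).norm ℝ fun h => hκ s (by rw [curv, h, norm_zero])).inv (hκ s)
  set n' := (curv γ s)⁻¹ • deriv (deriv (deriv γ)) s +
    deriv (fun u => (curv γ u)⁻¹) s • deriv (deriv γ) s
  have hn : HasDerivAt (nrml γ) n' s := hinv.hasDerivAt.smul (hγ3 s).hasDerivAt
  have htn : ⟪tang γ s, n'⟫ = -curv γ s := by
    have h := (hasDerivAt_tang (hγ2 s)).inner_add_inner_eq_zero hn fun u => frame u 0 1
    have hnn : ⟪nrml γ s, nrml γ s⟫ = 1 := by simpa using frame s 1 1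
    rw [real_inner_smul_left, hnn] at h
    linarith
  have hnn : ⟪nrml γ s, n'⟫ = 0 := by
    have h := hn.inner_add_inner_eq_zero hn fun u => frame u 1 1
    rw [real_inner_comm] at h
    linarith
  have hbn : ⟪binrml γ s, n'⟫ = tors γ s := by
    have hbn : ⟪binrml γ s, nrml γ s⟫ = 0 := by simpa using frame s 2 1
    rw [inner_add_right, real_inner_smul_right, real_inner_smul_right, ← curv_smul_nrml γ s,
      real_inner_smul_right, hbn, tors_eq_inner_binrml]
    ring
  refine hn.congr_deriv ?_
  simpa using (orthonormal_frenetFrame hγ2 harc (hκ s)).eq_smul_add_smul_add_smul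
    finrank_euclideanSpace_fin htn hnn hbn

theorem hasDerivAt_binrml (hγ2 : Differentiable ℝ (deriv γ))
    (hγ3 : Differentiable ℝ (deriv (deriv γ))) (harc : ∀ s, ‖deriv γ s‖ = 1)
    (hκ : ∀ s, curv γ s ≠ 0) (s : ℝ) :
    HasDerivAt (binrml γ) (-tors γ s • nrml γ s) s := by
  have frame := fun u => orthonormal_iff_ite.mp (orthonormal_frenetFrame hγ2 harc (hκ u))
  have htb : ⟪tang γ s, binrml γ s⟫ = 0 := by simpa using frame s 0 2
  have hnb : ⟪nrml γ s, binrml γ s⟫ = 0 := by simpa using frame s 1 2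
  have hbb : ⟪binrml γ s, binrml γ s⟫ = 1 := by simpa using frame s 2 2
  have ht := hasDerivAt_tang (hγ2 s)
  have hn := hasDerivAt_nrml hγ2 hγ3 harc hκ s
  set b' := deriv (binrml γ) s
  have hb : HasDerivAt (binrml γ) b' s :=
    (ht.differentiableAt.cross3 hn.differentiableAt).hasDerivAt
  have htb' : ⟪tang γ s, b'⟫ = 0 := by
    have h := ht.inner_add_inner_eq_zero hb fun u => frame u 0 2
    rw [real_inner_smul_left, hnb] at h
    linarith
  have hnb' : ⟪nrml γ s, b'⟫ = -tors γ s := by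
    have h := hn.inner_add_inner_eq_zero hb fun u => frame u 1 2
    rw [inner_add_left, real_inner_smul_left, real_inner_smul_left, htb, hbb] at h
    linarith
  have hbb' : ⟪binrml γ s, b'⟫ = 0 := by
    have h := hb.inner_add_inner_eq_zero hb fun u => frame u 2 2
    rw [real_inner_comm] at h
    linarith
  refine hb.congr_deriv ?_
  simpa using (orthonormal_frenetFrame hγ2 harc (hκ s)).eq_smul_add_smul_add_smul
    finrank_euclideanSpace_fin htb' hnb' hbb'

end Frenet

theorem Orthonormal.norm_sq_tube_fderiv_apply {E : Type*} [NormedAddCommGroup E]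
    [InnerProductSpace ℝ E] {t n b : E} (h : Orthonormal ℝ ![t, n, b]) (κ τ r θ : ℝ) (η : ℝ × ℝ) :
    ‖η.1 • (t + (r * Real.cos θ) • (-κ • t + τ • b) + (r * Real.sin θ) • (-τ • n)) +
        η.2 • (r • (Real.cos θ • b - Real.sin θ • n))‖ ^ 2 =
      η.1 ^ 2 * (1 - r * κ * Real.cos θ) ^ 2 + r ^ 2 * (η.2 + η.1 * τ) ^ 2 := by
  have hv : η.1 • (t + (r * Real.cos θ) • (-κ • t + τ • b) + (r * Real.sin θ) • (-τ • n)) +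
        η.2 • (r • (Real.cos θ • b - Real.sin θ • n)) =
      (η.1 * (1 - r * κ * Real.cos θ)) • t + (-(r * Real.sin θ) * (η.2 + η.1 * τ)) • n +
        (r * Real.cos θ * (η.2 + η.1 * τ)) • b := by
    module
  rw [hv, h.norm_sq_smul_add_smul_add_smul]
  linear_combination (r ^ 2 * (η.2 + η.1 * τ) ^ 2) * Real.sin_sq_add_cos_sq θ

theorem tube_dist_sq_expansion_general (γ : ℝ → EuclideanSpace ℝ (Fin 3))
    (hγ : ContDiff ℝ 3 γ) (harc : ∀ s, ‖deriv γ s‖ = 1)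
    (hκ : ∀ s, 0 < curv γ s) (r : ℝ) (s θ : ℝ) :
    (fun η : ℝ × ℝ =>
        ‖tubeMap γ r (s + η.1) (θ + η.2) - tubeMap γ r s θ‖ ^ 2 -
          (η.1 ^ 2 * (1 - r * curv γ s * Real.cos θ) ^ 2 +
            r ^ 2 * (η.2 + η.1 * tors γ s) ^ 2)) =o[nhds (0 : ℝ × ℝ)]
      fun η : ℝ × ℝ => η.1 ^ 2 + η.2 ^ 2 := by
  have hγ2 : Differentiable ℝ (deriv γ) :=
    ((hγ.of_le (by norm_num)).iterate_deriv' 1 1).differentiable one_ne_zero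
  have hγ3 : Differentiable ℝ (deriv (deriv γ)) :=
    ((hγ.of_le (by norm_num)).iterate_deriv' 1 2).differentiable one_ne_zero
  have hκ0 : ∀ s, curv γ s ≠ 0 := fun s => (hκ s).ne'
  have ht : HasDerivAt γ (tang γ s) s := (hγ.differentiable (by norm_num) s).hasDerivAt
  have hp := hasFDerivAt_tube ht
    (hasDerivAt_nrml hγ2 hγ3 harc hκ0 s) (hasDerivAt_binrml hγ2 hγ3 harc hκ0 s) r θ
  refine (hp.norm_sub_sq_sub_norm_sq_isLittleO.trans_isBigO
    (isBigO_norm_sq_fst_sq_add_snd_sq _)).congr_left fun η => ?_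
  simp only [add_apply, ContinuousLinearMap.smulRight_apply,
    ContinuousLinearMap.coe_fst', ContinuousLinearMap.coe_snd']
  rw [(orthonormal_frenetFrame hγ2 harc (hκ0 s)).norm_sq_tube_fderiv_apply]
  rfl

/-- second-order expansion of the squared Euclidean distance between
nearby boundary points of the tube:
`‖p(r, s+η₁, θ+η₂) − p(r, s, θ)‖² = η₁²(1 − r κ(s) cos θ)² + r²(η₂ + η₁ τ(s))² + o(η₁² + η₂²)`
as `(η₁, η₂) → (0, 0)`. -/
theorem tube_dist_sq_expansion (γ : ℝ → EuclideanSpace ℝ (Fin 3))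
    (hγ : ContDiff ℝ 3 γ) (harc : ∀ s, ‖deriv γ s‖ = 1)
    (hκ : ∀ s, 0 < curv γ s) (r : ℝ) (hr : 0 < r) (s θ : ℝ) :
    (fun η : ℝ × ℝ =>
        ‖tubeMap γ r (s + η.1) (θ + η.2) - tubeMap γ r s θ‖ ^ 2 -
          (η.1 ^ 2 * (1 - r * curv γ s * Real.cos θ) ^ 2 +
            r ^ 2 * (η.2 + η.1 * tors γ s) ^ 2)) =o[nhds (0 : ℝ × ℝ)]
      fun η : ℝ × ℝ => η.1 ^ 2 + η.2 ^ 2 :=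
  tube_dist_sq_expansion_general γ hγ harc hκ r s θ
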